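/- Let G be a finitely generated infinite group. Then there exists a map φ : ℤ → G that is an isometric embedding with respect to the word metric on G (for some finite generating set) and the standard metric on ℤ; in particular ℤ uniformly embeds into G. -/
import Mathlib


/-- Word metric: `wordDist S a b` is the length of a shortest word in `S ∪ S⁻¹`
representing `a⁻¹ * b`. -/
noncomputable def wordDist {G : Type*} [Group G] (S : Finset G) (a b : G) : ℕ :=
  sInf {n : ℕ | ∃ l : List G, (∀ x ∈ l, x ∈ S ∨ x⁻¹ ∈ S) ∧ l.length = n ∧
    l.prod = a⁻¹ * b}

namespace WDAux

open scoped Classical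

variable {G : Type*} [Group G]

/-- A word over `S ∪ S⁻¹`. -/
def Good (S : Finset G) (l : List G) : Prop := ∀ x ∈ l, x ∈ S ∨ x⁻¹ ∈ S

/-- The set of lengths of words representing `g`. -/
def WSet (S : Finset G) (g : G) : Set ℕ :=
  {n | ∃ l : List G, Good S l ∧ l.length = n ∧ l.prod = g}

/-- The distance from `1`. -/
noncomputable def D (S : Finset G) (g : G) : ℕ := sInf (WSet S g)

lemma wordDist_eq (S : Finset G) (a b : G) : wordDist S a b = D S (a⁻¹ * b) := rfl

lemma wordDist_one (S : Finset G) (g : G) : wordDist S 1 g = D S g := by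
  simp [wordDist_eq]

lemma wordDist_left (S : Finset G) (x a b : G) :
    wordDist S (x * a) (x * b) = wordDist S a b := by
  simp [wordDist_eq, mul_assoc]

lemma wset_nonempty {S : Finset G} (hS : Subgroup.closure (S : Set G) = ⊤) (g : G) :
    (WSet S g).Nonempty := by
  have hg : g ∈ Submonoid.closure ((S : Set G) ∪ (S : Set G)⁻¹) := by
    rw [← Subgroup.closure_toSubmonoid, hS]; trivial
  obtain ⟨l, hl, hp⟩ := Submonoid.exists_list_of_mem_closure hg
  refine ⟨l.length, l, ?_, rfl, hp⟩
  intro x hx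
  rcases hl x hx with h | h
  · exact Or.inl h
  · exact Or.inr (Set.mem_inv.mp h)

lemma D_le {S : Finset G} {g : G} {l : List G} (hl : Good S l) (hp : l.prod = g) :
    D S g ≤ l.length := Nat.sInf_le ⟨l, hl, rfl, hp⟩

lemma exists_min {S : Finset G} (hS : Subgroup.closure (S : Set G) = ⊤) (g : G) :
    ∃ l : List G, Good S l ∧ l.prod = g ∧ l.length = D S g := by
  obtain ⟨l, h1, h2, h3⟩ := Nat.sInf_mem (wset_nonempty hS g)
  exact ⟨l, h1, h3, h2⟩

lemma good_append {S : Finset G} {l₁ l₂ : List G} (h1 : Good S l₁) (h2 : Good S l₂) :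
    Good S (l₁ ++ l₂) := by
  intro x hx
  rcases List.mem_append.mp hx with h | h
  · exact h1 x h
  · exact h2 x h

lemma wset_inv_subset (S : Finset G) (g : G) : WSet S g ⊆ WSet S g⁻¹ := by
  rintro n ⟨l, hl, hlen, hp⟩
  refine ⟨(l.map fun x => x⁻¹).reverse, ?_, by simp [hlen], ?_⟩
  · intro x hx
    simp only [List.mem_reverse, List.mem_map] at hx
    obtain ⟨y, hy, rfl⟩ := hx
    rcases hl y hy with h' | h'
    · exact Or.inr (by simpa using h')
    · exact Or.inl h'
  · rw [← List.prod_inv_reverse, hp]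

lemma D_symm (S : Finset G) (g : G) : D S g⁻¹ = D S g := by
  have : WSet S g⁻¹ = WSet S g := by
    apply le_antisymm
    · have := wset_inv_subset S g⁻¹
      rwa [inv_inv] at this
    · exact wset_inv_subset S g
  rw [D, D, this]

lemma wordDist_symm {S : Finset G} (hS : Subgroup.closure (S : Set G) = ⊤) (a b : G) :
    wordDist S a b = wordDist S b a := by
  rw [wordDist_eq, wordDist_eq, ← D_symm, mul_inv_rev, inv_inv]

/-- a subword of a minimal word is minimal. -/
lemma middle_min {S : Finset G} (hS : Subgroup.closure (S : Set G) = ⊤)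
    {p m q : List G} (h : Good S (p ++ m ++ q))
    (hmin : D S (p ++ m ++ q).prod = (p ++ m ++ q).length) :
    D S m.prod = m.length := by
  have hm : Good S m := fun x hx => h x (by simp [hx])
  have hp : Good S p := fun x hx => h x (by simp [hx])
  have hq : Good S q := fun x hx => h x (by simp [hx])
  have hle : D S m.prod ≤ m.length := D_le hm rfl
  rcases eq_or_lt_of_le hle with heq | hlt
  · exact heq
  exfalso
  obtain ⟨m', hm', hm'p, hm'len⟩ := exists_min hS m.prod
  have : D S (p ++ m ++ q).prod ≤ (p ++ m' ++ q).length :=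
    D_le (good_append (good_append hp hm') hq) (by simp [List.prod_append, hm'p])
  simp only [List.length_append] at this hmin
  omega

/-- Symmetrized generating set as a Finset. -/
noncomputable def T (S : Finset G) : Finset G := S ∪ S.image fun x => x⁻¹

lemma mem_T {S : Finset G} {x : G} (h : x ∈ S ∨ x⁻¹ ∈ S) : x ∈ T S := by
  rcases h with h | h
  · exact Finset.mem_union_left _ h
  · exact Finset.mem_union_right _ (Finset.mem_image.mpr ⟨x⁻¹, h, by simp⟩)

/-- Ball of radius `n` (as a Finset over-approximation). -/
noncomputable def Ball (S : Finset G) : ℕ → Finset G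
  | 0 => {1}
  | n + 1 => Ball S n ∪ (T S).biUnion fun t => (Ball S n).image fun g => t * g

lemma ball_mono {S : Finset G} : ∀ {n m : ℕ}, n ≤ m → Ball S n ⊆ Ball S m := by
  intro n m h
  induction m with
  | zero => simpa [Nat.le_zero.mp h]
  | succ m ih =>
    rcases Nat.lt_or_ge n (m + 1) with h' | h'
    · exact (ih (Nat.lt_succ_iff.mp h')).trans (Finset.subset_union_left)
    · have : n = m + 1 := le_antisymm h h'
      subst this; exact subset_rfl

lemma prod_mem_ball {S : Finset G} : ∀ {l : List G}, Good S l → l.prod ∈ Ball S l.length := by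
  intro l
  induction l with
  | nil => intro _; simp [Ball]
  | cons x xs ih =>
    intro h
    have hx : x ∈ T S := mem_T (h x (by simp))
    have hxs : xs.prod ∈ Ball S xs.length := ih fun y hy => h y (by simp [hy])
    simp only [List.prod_cons, List.length_cons, Ball]
    exact Finset.mem_union_right _ (Finset.mem_biUnion.mpr
      ⟨x, hx, Finset.mem_image.mpr ⟨xs.prod, hxs, rfl⟩⟩)

lemma mem_ball_of_D_le {S : Finset G} (hS : Subgroup.closure (S : Set G) = ⊤)
    {g : G} {n : ℕ} (h : D S g ≤ n) : g ∈ Ball S n := by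
  obtain ⟨l, hl, hp, hlen⟩ := exists_min hS g
  have := prod_mem_ball hl
  rw [hp, hlen] at this
  exact ball_mono h this

/-- There are minimal words of arbitrarily large length. -/
lemma exists_long_min [Infinite G] {S : Finset G} (hS : Subgroup.closure (S : Set G) = ⊤) (n : ℕ) :
    ∃ l : List G, Good S l ∧ D S l.prod = l.length ∧ 2 * n ≤ l.length := by
  obtain ⟨g, hg⟩ := Infinite.exists_notMem_finset (Ball S (2 * n))
  have hgt : 2 * n < D S g := by
    by_contra h
    exact hg (mem_ball_of_D_le hS (le_of_not_gt h))
  obtain ⟨l, hl, hp, hlen⟩ := exists_min hS g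
  exact ⟨l, hl, by rw [hp, hlen], by omega⟩

/-- Key lemma: distances along a minimal word. -/
lemma key {S : Finset G} (hS : Subgroup.closure (S : Set G) = ⊤)
    {l : List G} (hg : Good S l) (hmin : D S l.prod = l.length)
    {a b : ℕ} (hab : a ≤ b) (hb : b ≤ l.length) :
    wordDist S (l.take a).prod (l.take b).prod = b - a := by
  set m : List G := (l.take b).drop a with hm
  have htb : l.take b = l.take a ++ m := by
    conv_lhs => rw [← List.take_append_drop a (l.take b)]
    rw [List.take_take, min_eq_left hab]
  have hsplit : l = l.take a ++ m ++ l.drop b := by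
    rw [← htb, List.take_append_drop]
  have hmid : D S m.prod = m.length := by
    apply middle_min hS (p := l.take a) (q := l.drop b)
    · rw [← hsplit]; exact hg
    · rw [← hsplit]; exact hmin
  have hprod : (l.take a).prod⁻¹ * (l.take b).prod = m.prod := by
    rw [htb, List.prod_append, inv_mul_cancel_left]
  have hlen : m.length = b - a := by
    rw [hm, List.length_drop, List.length_take]
    omega
  rw [wordDist_eq, hprod, hmid, hlen]

end WDAux

open WDAux in
/-- Every finitely generated infinite group contains an isometrically embedded copy of `ℤ`
with respect to the word metric of some finite generating set; in particular `ℤ` uniformly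
embeds into `G`. -/
theorem exists_isometric_embedding_of_int
    {G : Type*} [Group G] [Infinite G]
    (hfg : ∃ S : Finset G, Subgroup.closure (S : Set G) = ⊤) :
    ∃ S : Finset G, Subgroup.closure (S : Set G) = ⊤ ∧
      ∃ φ : ℤ → G, ∀ m n : ℤ, wordDist S (φ m) (φ n) = (m - n).natAbs := by
  obtain ⟨S, hS⟩ := hfg
  refine ⟨S, hS, ?_⟩
  -- choose arbitrarily long minimal words
  choose l hgood hmin hlen using fun n => exists_long_min hS n
  -- centered geodesic segments
  set c : ℕ → ℤ → G := fun n k =>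
    ((l n).take n).prod⁻¹ * ((l n).take (n + k).toNat).prod with hc
  -- the key distance computation for the segments
  have hdist : ∀ (n : ℕ) (j k : ℤ), j.natAbs ≤ n → k.natAbs ≤ n → j ≤ k →
      wordDist S (c n j) (c n k) = (j - k).natAbs := by
    intro n j k hj hk hjk
    have ha : (n + j).toNat ≤ (n + k).toNat := by omega
    have hb : (n + k).toNat ≤ (l n).length := by
      have := hlen n; omega
    rw [hc]
    simp only
    rw [wordDist_left]
    rw [key hS (hgood n) (hmin n) ha hb]
    omega
  have hdist' : ∀ (n : ℕ) (j k : ℤ), j.natAbs ≤ n → k.natAbs ≤ n →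
      wordDist S (c n j) (c n k) = (j - k).natAbs := by
    intro n j k hj hk
    rcases le_total j k with h | h
    · exact hdist n j k hj hk h
    · rw [wordDist_symm hS, hdist n k j hk hj h]
      omega
  -- c n 0 = 1
  have hc0 : ∀ n : ℕ, c n 0 = 1 := by
    intro n; rw [hc]; simp
  -- values of c · k eventually lie in a finite ball
  set U : Ultrafilter ℕ := Filter.hyperfilter ℕ with hU
  have hcof : ∀ s : Set ℕ, s ∈ Filter.cofinite → s ∈ U :=
    fun s hs => Filter.hyperfilter_le_cofinite hs
  have hball : ∀ k : ℤ, {n : ℕ | c n k ∈ Ball S k.natAbs} ∈ U := by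
    intro k
    apply Filter.mem_of_superset (hcof {n | k.natAbs ≤ n} ?_)
    · intro n hn
      have : wordDist S (c n 0) (c n k) = (0 - k).natAbs :=
        hdist' n 0 k (by simp) hn
      rw [hc0 n, wordDist_one] at this
      simp only [Set.mem_setOf_eq]
      exact mem_ball_of_D_le hS (le_of_eq (by omega))
    · have : {n : ℕ | k.natAbs ≤ n}ᶜ ⊆ Set.Iio k.natAbs := by
        intro n hn; simp at hn ⊢; omega
      exact Filter.mem_cofinite.mpr (Set.finite_Iio _ |>.subset this)
  -- eventually constant along the ultrafilter
  have hconst : ∀ k : ℤ, ∃ a : G, {n : ℕ | c n k = a} ∈ U := by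
    intro k
    have hsub : {n : ℕ | c n k ∈ Ball S k.natAbs} ⊆
        ⋃ a ∈ ((Ball S k.natAbs : Finset G) : Set G), {n : ℕ | c n k = a} := by
      intro n hn
      exact Set.mem_biUnion hn rfl
    have hmem := Filter.mem_of_superset (hball k) hsub
    obtain ⟨a, -, ha⟩ :=
      (Ultrafilter.finite_biUnion_mem_iff (Ball S k.natAbs).finite_toSet).mp hmem
    exact ⟨a, ha⟩
  choose φ hφ using hconst
  refine ⟨φ, fun m n => ?_⟩
  have hA : ({n' : ℕ | c n' m = φ m} ∩ {n' : ℕ | c n' n = φ n} ∩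
      {n' : ℕ | m.natAbs ≤ n' ∧ n.natAbs ≤ n'}) ∈ U := by
    refine Filter.inter_mem (Filter.inter_mem (hφ m) (hφ n)) (hcof _ ?_)
    have : {n' : ℕ | m.natAbs ≤ n' ∧ n.natAbs ≤ n'}ᶜ ⊆ Set.Iio (max m.natAbs n.natAbs) := by
      intro x hx; simp at hx ⊢; omega
    exact Filter.mem_cofinite.mpr (Set.finite_Iio _ |>.subset this)
  obtain ⟨N, ⟨⟨h1, h2⟩, h3, h4⟩⟩ := Ultrafilter.nonempty_of_mem hA
  rw [← h1, ← h2]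
  exact hdist' N m n h3 h4
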